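/- arXiv:1411.4684 — 2 statements merged into one kernel-verified Lean document; each statement's English description precedes it below -/
import Mathlib

section
/- For locally finite Borel measures μ on X and ν on Y, the product measure satisfies dim_*(μ ⊗ ν) ≥ dim_* μ + dim_* ν, where the product space X × Y carries the max metric. -/
open MeasureTheory
open scoped ENNReal

/-- The lower Hausdorff dimension of a measure:
`dim_* μ = inf {dim_H A : A Borel, μ(A) > 0}`. -/
noncomputable def lowerDim {X : Type*} [EMetricSpace X] [MeasurableSpace X]
    (μ : Measure X) : ℝ≥0∞ :=
  ⨅ (A : Set X) (_ : MeasurableSet A) (_ : 0 < μ A), dimH A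

/-!
Call `x` an `s`-Frostman point of `μ` if `μ (B(x, r)) ≤ C r^s` for all small `r`. A Vitali
covering argument shows that the points where this fails with `C = 1` form a set of Hausdorff
dimension at most `s`, so for `s < dim_* μ` almost every point is `s`-Frostman. Conversely, by
the mass distribution principle, if almost every point is `s`-Frostman then every set of positive
measure has dimension at least `s`. Hence `dim_* μ` is the supremum of the `s` for which almost
every point is `s`-Frostman. In the max metric a ball in `X × Y` is a product of balls, so
`(x, y)` is `(s + t)`-Frostman for `μ ⊗ ν` as soon as `x` is `s`-Frostman for `μ` and `y` is
`t`-Frostman for `ν`, which holds almost everywhere because the projections are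
quasi-measure-preserving.
-/

open Set Metric Filter
open scoped NNReal Topology

universe u

def FrostmanAt {Z : Type*} [MetricSpace Z] [MeasurableSpace Z] (μ : Measure Z) (s : ℝ≥0)
    (x : Z) : Prop :=
  ∃ C : ℝ≥0, ∀ᶠ r in 𝓝[>] 0, μ (closedBall x r) ≤ C * ENNReal.ofReal r ^ (s : ℝ)

theorem FrostmanAt.prod {X Y : Type*} [MetricSpace X] [MeasurableSpace X] [MetricSpace Y]
    [MeasurableSpace Y] {μ : Measure X} {ν : Measure Y} [SFinite ν] {s t : ℝ≥0} {x : X} {y : Y}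
    (hx : FrostmanAt μ s x) (hy : FrostmanAt ν t y) : FrostmanAt (μ.prod ν) (s + t) (x, y) := by
  obtain ⟨C, hC⟩ := hx
  obtain ⟨D, hD⟩ := hy
  refine ⟨C * D, ?_⟩
  filter_upwards [hC, hD] with r hCr hDr
  rw [← closedBall_prod_same, Measure.prod_prod, NNReal.coe_add,
    ENNReal.rpow_add_of_nonneg _ _ s.coe_nonneg t.coe_nonneg, ENNReal.coe_mul]
  calc μ (closedBall x r) * ν (closedBall y r)
      ≤ (C * ENNReal.ofReal r ^ (s : ℝ)) * (D * ENNReal.ofReal r ^ (t : ℝ)) := mul_le_mul' hCr hDr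
    _ = C * D * (ENNReal.ofReal r ^ (s : ℝ) * ENNReal.ofReal r ^ (t : ℝ)) := by ring

section

variable {Z : Type u} [MetricSpace Z]

theorem ediam_closedBall_le_ofReal (x : Z) (r : ℝ) :
    ediam (closedBall x r) ≤ ENNReal.ofReal (2 * r) :=
  ediam_le_of_forall_dist_le fun a ha b hb =>
    (dist_triangle_right a b x).trans (by linarith [mem_closedBall.1 ha, mem_closedBall.1 hb])

variable [MeasurableSpace Z]

theorem frostmanAt_zero (μ : Measure Z) [IsLocallyFiniteMeasure μ] (x : Z) : FrostmanAt μ 0 x := by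
  obtain ⟨U, hxU, hUo, hUμ⟩ := μ.exists_isOpen_measure_lt_top x
  refine ⟨(μ U).toNNReal, ?_⟩
  filter_upwards [nhdsWithin_le_nhds (eventually_closedBall_subset (hUo.mem_nhds hxU))] with r hr
  simpa [ENNReal.coe_toNNReal hUμ.ne] using measure_mono hr

variable [BorelSpace Z]

theorem hausdorffMeasure_le_of_forall_countable_cover {E : Set Z} {d : ℝ} {C : ℝ≥0∞}
    (h : ∀ δ > 0, ∃ (ι : Type u) (_ : Countable ι) (t : ι → Set Z),
      E ⊆ ⋃ i, t i ∧ (∀ i, ediam (t i) ≤ ENNReal.ofReal δ) ∧ ∑' i, ediam (t i) ^ d ≤ C) :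
    μH[d] E ≤ C := by
  choose ι hι t hEt hdiam hsum using fun k : ℕ => h (1 / ((k : ℝ) + 1)) Nat.one_div_pos_of_nat
  have hδ : Tendsto (fun k : ℕ => ENNReal.ofReal (1 / ((k : ℝ) + 1))) atTop (𝓝 0) := by
    simpa using ENNReal.tendsto_ofReal (tendsto_one_div_add_atTop_nhds_zero_nat (𝕜 := ℝ))
  calc μH[d] E ≤ liminf (fun k => ∑' i, ediam (t k i) ^ d) atTop :=
        Measure.hausdorffMeasure_le_liminf_tsum d E _ hδ t (.of_forall hdiam) (.of_forall hEt)
    _ ≤ C := liminf_le_of_frequently_le' (.of_forall hsum)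

theorem exists_countable_cover_tsum_ediam_rpow_le [SecondCountableTopology Z] (μ : Measure Z)
    {E U : Set Z} {s : ℝ≥0}
    (h : ∀ x ∈ E, ∃ᶠ r in 𝓝[>] 0,
      closedBall x r ⊆ U ∧ ENNReal.ofReal r ^ (s : ℝ) < μ (closedBall x r))
    {δ : ℝ} (hδ : 0 < δ) :
    ∃ (ι : Type u) (_ : Countable ι) (t : ι → Set Z), E ⊆ ⋃ i, t i ∧
      (∀ i, ediam (t i) ≤ ENNReal.ofReal δ) ∧
      ∑' i, ediam (t i) ^ (s : ℝ) ≤ 8 ^ (s : ℝ) * μ U := by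
  -- Vitali enlarges radii fourfold, and a ball of radius `4 r` has diameter at most `8 r`.
  set T := {p : Z × ℝ | p.1 ∈ E ∧ p.2 ∈ Ioo 0 (δ / 8) ∧ closedBall p.1 p.2 ⊆ U ∧
    ENNReal.ofReal p.2 ^ (s : ℝ) < μ (closedBall p.1 p.2)}
  obtain ⟨u, huT, hdisj, hcover⟩ :=
    Vitali.exists_disjoint_subfamily_covering_enlargement_closedBall T Prod.fst Prod.snd (δ / 8)
      (fun p hp => hp.2.1.2.le) 4 (by norm_num)
  have hu : u.Countable := hdisj.countable_of_nonempty_interior fun p hp =>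
    ⟨p.1, ball_subset_interior_closedBall (mem_ball_self (huT hp).2.1.1)⟩
  have hball : ∀ p ∈ u, ediam (closedBall p.1 (4 * p.2)) ^ (s : ℝ) ≤
      8 ^ (s : ℝ) * μ (closedBall p.1 p.2) := fun p hp => by
    obtain ⟨-, hr, -, hμ⟩ := huT hp
    have hdiam : ediam (closedBall p.1 (4 * p.2)) ≤ ENNReal.ofReal (8 * p.2) :=
      (ediam_closedBall_le_ofReal _ _).trans_eq (by ring_nf)
    calc ediam (closedBall p.1 (4 * p.2)) ^ (s : ℝ) ≤ ENNReal.ofReal (8 * p.2) ^ (s : ℝ) := by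
          gcongr
      _ = 8 ^ (s : ℝ) * ENNReal.ofReal p.2 ^ (s : ℝ) := by
          rw [ENNReal.ofReal_mul (by norm_num), ENNReal.mul_rpow_of_nonneg _ _ s.coe_nonneg]
          norm_num
      _ ≤ 8 ^ (s : ℝ) * μ (closedBall p.1 p.2) := by grw [hμ.le]
  refine ⟨u, hu.to_subtype, fun p => closedBall p.1.1 (4 * p.1.2), fun x hx => ?_,
    fun ⟨p, hp⟩ => ?_, ?_⟩
  · obtain ⟨r, hr, hrU, hrμ⟩ := (nhdsGT_basis 0).frequently_iff.1 (h x hx) (δ / 8) (by positivity)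
    obtain ⟨p, hpu, hsub⟩ := hcover (x, r) ⟨hx, hr, hrU, hrμ⟩
    exact mem_iUnion.2 ⟨⟨p, hpu⟩, hsub (mem_closedBall_self hr.1.le)⟩
  · refine (ediam_closedBall_le_ofReal _ _).trans (ENNReal.ofReal_le_ofReal ?_)
    linarith [(huT hp).2.1.2]
  · calc ∑' p : u, ediam (closedBall p.1.1 (4 * p.1.2)) ^ (s : ℝ)
        ≤ ∑' p : u, 8 ^ (s : ℝ) * μ (closedBall p.1.1 p.1.2) :=
          ENNReal.tsum_le_tsum fun p => hball p p.2
      _ = 8 ^ (s : ℝ) * μ (⋃ p ∈ u, closedBall p.1 p.2) := by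
          rw [ENNReal.tsum_mul_left, measure_biUnion hu hdisj fun p _ => measurableSet_closedBall]
      _ ≤ 8 ^ (s : ℝ) * μ U := by
          grw [iUnion₂_subset fun p hp => (huT hp).2.2.1]

theorem dimH_setOf_frequently_lt_measure_closedBall_le [SecondCountableTopology Z]
    (μ : Measure Z) [IsLocallyFiniteMeasure μ] (s : ℝ≥0) :
    dimH {x | ∃ᶠ r in 𝓝[>] 0, ENNReal.ofReal r ^ (s : ℝ) < μ (closedBall x r)} ≤ s := by
  set E := {x | ∃ᶠ r in 𝓝[>] 0, ENNReal.ofReal r ^ (s : ℝ) < μ (closedBall x r)}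
  by_contra! hlt
  obtain ⟨x, -, hx⟩ := exists_mem_nhdsWithin_lt_dimH_of_lt_dimH hlt
  obtain ⟨U, hxU, hUo, hUμ⟩ := μ.exists_isOpen_measure_lt_top x
  have hfreq : ∀ y ∈ E ∩ U, ∃ᶠ r in 𝓝[>] 0,
      closedBall y r ⊆ U ∧ ENNReal.ofReal r ^ (s : ℝ) < μ (closedBall y r) := fun y hy =>
    (hy.1.and_eventually (nhdsWithin_le_nhds (eventually_closedBall_subset
      (hUo.mem_nhds hy.2)))).mono fun _ h => ⟨h.2, h.1⟩
  have hfin : μH[s] (E ∩ U) ≠ ∞ :=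
    ne_top_of_le_ne_top (ENNReal.mul_ne_top (by simp) hUμ.ne)
      (hausdorffMeasure_le_of_forall_countable_cover fun _ hδ =>
        exists_countable_cover_tsum_ediam_rpow_le μ hfreq hδ)
  exact (hx (E ∩ U) (inter_mem_nhdsWithin E (hUo.mem_nhds hxU))).not_ge
    (dimH_le_of_hausdorffMeasure_ne_top hfin)

theorem lowerDim_le_dimH (μ : Measure Z) {E : Set Z} (hE : μ E ≠ 0) : lowerDim μ ≤ dimH E := by
  refine le_of_forall_gt_imp_ge_of_dense fun c hc => ?_
  obtain ⟨d, hEd, hdc⟩ := ENNReal.lt_iff_exists_nnreal_btwn.1 hc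
  obtain ⟨G, hEG, hGm, hG0⟩ := exists_measurable_superset_of_null (hausdorffMeasure_of_dimH_lt hEd)
  have hG : 0 < μ G := (pos_iff_ne_zero.2 hE).trans_le (measure_mono hEG)
  calc lowerDim μ ≤ dimH G := iInf_le_of_le G (iInf_le_of_le hGm (iInf_le _ hG))
    _ ≤ d := dimH_le_of_hausdorffMeasure_ne_top (by simp [hG0])
    _ ≤ c := hdc.le

theorem ae_frostmanAt_of_lt_lowerDim [SecondCountableTopology Z] (μ : Measure Z)
    [IsLocallyFiniteMeasure μ] {s : ℝ≥0} (hs : (s : ℝ≥0∞) < lowerDim μ) :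
    ∀ᵐ x ∂μ, FrostmanAt μ s x := by
  have hsub : {x | ¬FrostmanAt μ s x} ⊆
      {x | ∃ᶠ r in 𝓝[>] 0, ENNReal.ofReal r ^ (s : ℝ) < μ (closedBall x r)} := fun x hx => by
    simp only [FrostmanAt, not_exists, not_eventually, not_le] at hx
    simpa using hx 1
  refine ae_iff.2 (measure_mono_null hsub (by_contra fun h => hs.not_ge ?_))
  exact (lowerDim_le_dimH μ h).trans (dimH_setOf_frequently_lt_measure_closedBall_le μ s)

theorem restrict_le_mkMetric_of_forall_measure_closedBall_le {μ : Measure Z} {S : Set Z}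
    {c : ℝ≥0∞} {d : ℝ} {ε : ℝ} (hc : c ≠ ∞) (hε : 0 < ε)
    (h : ∀ z ∈ S, ∀ r ∈ Ioo 0 ε, μ (closedBall z r) ≤ c * ENNReal.ofReal r ^ d) :
    μ.restrict S ≤ Measure.mkMetric fun r => c * r ^ d := by
  -- A set `t` whose closure meets `S` at `z` lies in `closedBall z r` for every `r > diam t`;
  -- let `r` decrease to `diam t`.
  refine Measure.le_mkMetric _ _ (ENNReal.ofReal (ε / 2)) (by simpa using hε) fun t ht => ?_
  have htop : ediam t ≠ ∞ := ne_top_of_le_ne_top ENNReal.ofReal_ne_top ht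
  rcases (closure t ∩ S).eq_empty_or_nonempty with hempty | ⟨z, hzt, hzS⟩
  · calc μ.restrict S t ≤ μ.restrict S (closure t) := measure_mono subset_closure
      _ = 0 := by rw [Measure.restrict_apply isClosed_closure.measurableSet, hempty, measure_empty]
      _ ≤ _ := zero_le
  have hsub : t ⊆ closedBall z (diam t) := fun w hw => by
    rw [mem_closedBall, ← diam_closure]
    exact dist_le_diam_of_mem' (by rwa [ediam_closure]) (subset_closure hw) hzt
  set ρ := diam t
  have hρε : ρ < ε :=
    (ENNReal.toReal_le_of_le_ofReal (by positivity) ht).trans_lt (by linarith)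
  have hcont : Continuous fun r : ℝ => c * ENNReal.ofReal r ^ d :=
    (ENNReal.continuous_const_mul hc).comp
      (ENNReal.continuous_rpow_const.comp ENNReal.continuous_ofReal)
  have hbound : ∀ r ∈ Ioo ρ ε, μ.restrict S t ≤ c * ENNReal.ofReal r ^ d := fun r hr =>
    calc μ.restrict S t ≤ μ (closedBall z r) :=
          (measure_mono (hsub.trans (closedBall_subset_closedBall hr.1.le))).trans
            (Measure.restrict_apply_le _ _)
      _ ≤ c * ENNReal.ofReal r ^ d := h z hzS r ⟨diam_nonneg.trans_lt hr.1, hr.2⟩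
  have := ge_of_tendsto (hcont.continuousWithinAt (s := Ioi ρ) (x := ρ))
    (eventually_of_mem (Ioo_mem_nhdsGT hρε) hbound)
  simpa [ρ, Metric.diam, ENNReal.ofReal_toReal htop] using this

theorem le_dimH_of_forall_measure_closedBall_le {μ : Measure Z} {S : Set Z} {c : ℝ≥0∞}
    {d : ℝ≥0} {ε : ℝ} (hc : c ≠ ∞) (hε : 0 < ε)
    (h : ∀ z ∈ S, ∀ r ∈ Ioo 0 ε, μ (closedBall z r) ≤ c * ENNReal.ofReal r ^ (d : ℝ))
    (hS : μ S ≠ 0) : (d : ℝ≥0∞) ≤ dimH S := by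
  refine le_dimH_of_hausdorffMeasure_ne_zero fun h0 => hS ?_
  -- `mkMetric_mono_smul` needs a nonzero constant, hence `c + 1` rather than `c`.
  have hle : (Measure.mkMetric fun r => c * r ^ (d : ℝ) : Measure Z) ≤ (c + 1) • μH[d] :=
    Measure.mkMetric_mono_smul (by simpa using hc) (by simp)
      (.of_forall fun r => by simp only [Pi.smul_apply, smul_eq_mul]; gcongr; exact le_self_add)
  have := (restrict_le_mkMetric_of_forall_measure_closedBall_le hc hε h).trans hle S
  rw [Measure.restrict_apply_self] at this
  simpa [h0] using this

theorem le_lowerDim_of_ae_frostmanAt {μ : Measure Z} {d : ℝ≥0}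
    (h : ∀ᵐ x ∂μ, FrostmanAt μ d x) : (d : ℝ≥0∞) ≤ lowerDim μ := by
  refine le_iInf₂ fun A _ => le_iInf fun hA => ?_
  set F : ℕ → ℕ → Set Z := fun n m => {x | ∀ r ∈ Ioo 0 (1 / ((n : ℝ) + 1)),
    μ (closedBall x r) ≤ m * ENNReal.ofReal r ^ (d : ℝ)}
  have hcover : {x | FrostmanAt μ d x} ⊆ ⋃ (n) (m), F n m := fun x ⟨C, hC⟩ => by
    obtain ⟨ε, hε, hCε⟩ := (nhdsGT_basis 0).eventually_iff.1 hC
    obtain ⟨n, hn⟩ := exists_nat_one_div_lt hε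
    obtain ⟨m, hm⟩ := exists_nat_ge C
    refine mem_iUnion₂.2 ⟨n, m, fun r hr => (hCε ⟨hr.1, hr.2.trans hn⟩).trans ?_⟩
    gcongr
    exact_mod_cast hm
  have hApos : μ (⋃ (n) (m), A ∩ F n m) ≠ 0 := by
    rw [← inter_iUnion₂]
    refine ne_of_gt ((hA.trans_eq (measure_inter_conull (mem_ae_iff.1 h)).symm).trans_le ?_)
    exact measure_mono (inter_subset_inter_right A hcover)
  obtain ⟨n, m, hnm⟩ : ∃ n m, μ (A ∩ F n m) ≠ 0 := by
    simpa [measure_iUnion_null_iff] using hApos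
  calc (d : ℝ≥0∞) ≤ dimH (A ∩ F n m) :=
        le_dimH_of_forall_measure_closedBall_le (ENNReal.natCast_ne_top m) Nat.one_div_pos_of_nat
          (fun z hz => hz.2) hnm
    _ ≤ dimH A := dimH_mono inter_subset_left

theorem lowerDim_eq_iSup_frostmanAt [SecondCountableTopology Z] (μ : Measure Z)
    [IsLocallyFiniteMeasure μ] :
    lowerDim μ = ⨆ (s : ℝ≥0) (_ : ∀ᵐ x ∂μ, FrostmanAt μ s x), (s : ℝ≥0∞) :=
  le_antisymm
    (ENNReal.le_of_forall_nnreal_lt fun s hs =>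
      le_iSup₂_of_le s (ae_frostmanAt_of_lt_lowerDim μ hs) le_rfl)
    (iSup₂_le fun _ hs => le_lowerDim_of_ae_frostmanAt hs)

end

theorem stmt_11_general {X Y : Type*} [MetricSpace X] [SecondCountableTopology X]
    [MeasurableSpace X] [BorelSpace X]
    [MetricSpace Y] [SecondCountableTopology Y]
    [MeasurableSpace Y] [BorelSpace Y]
    (μ : Measure X) (ν : Measure Y) [IsLocallyFiniteMeasure μ] [IsLocallyFiniteMeasure ν] :
    lowerDim (μ.prod ν) ≥ lowerDim μ + lowerDim ν := by
  rw [ge_iff_le, lowerDim_eq_iSup_frostmanAt μ, lowerDim_eq_iSup_frostmanAt ν]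
  refine ENNReal.biSup_add_biSup_le' ⟨0, .of_forall (frostmanAt_zero μ)⟩
    ⟨0, .of_forall (frostmanAt_zero ν)⟩ fun s hs t ht => ?_
  have hst : ∀ᵐ p ∂μ.prod ν, FrostmanAt (μ.prod ν) (s + t) p :=
    ((Measure.quasiMeasurePreserving_fst.ae hs).and
      (Measure.quasiMeasurePreserving_snd.ae ht)).mono fun p hp => hp.1.prod hp.2
  exact_mod_cast le_lowerDim_of_ae_frostmanAt hst

/-- For locally finite Borel measures `μ` on `X` and `ν` on `Y`, the product measure on
`X × Y` (with the max metric, which is the product metric) satisfies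
`dim_*(μ ⊗ ν) ≥ dim_* μ + dim_* ν`. -/
theorem stmt_11 {X Y : Type*} [MetricSpace X] [CompleteSpace X] [SecondCountableTopology X]
    [MeasurableSpace X] [BorelSpace X]
    [MetricSpace Y] [CompleteSpace Y] [SecondCountableTopology Y]
    [MeasurableSpace Y] [BorelSpace Y]
    (μ : Measure X) (ν : Measure Y) [IsLocallyFiniteMeasure μ] [IsLocallyFiniteMeasure ν]
    (hμ : μ ≠ 0) (hν : ν ≠ 0) :
    lowerDim (μ.prod ν) ≥ lowerDim μ + lowerDim ν :=
  stmt_11_general μ ν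
end

section
/- For Borel probability measures μ, ν on ℝ^d, the convolution satisfies dim_*(μ * ν) ≥ max(dim_* μ, dim_* ν). -/
/-!
If `(μ ∗ ν)(A) = ∫ ν(A - x) dμ(x)` is positive, then some translate `A - x` has positive
`ν`-measure, and translation does not change Hausdorff dimension; hence
`dim_* ν ≤ dim_H A`. The bound by `dim_* μ` follows by commutativity of convolution.
-/

open MeasureTheory
open scoped ENNReal

section LowerDim

variable {X : Type*} [EMetricSpace X] [MeasurableSpace X]

lemma lowerDim_le_dimH_s12 {μ : Measure X} {A : Set X} (hA : MeasurableSet A) (hpos : 0 < μ A) :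
    lowerDim μ ≤ dimH A :=
  iInf₂_le_of_le A hA (iInf_le _ hpos)

lemma le_lowerDim {μ : Measure X} {r : ℝ≥0∞}
    (h : ∀ A, MeasurableSet A → 0 < μ A → r ≤ dimH A) : r ≤ lowerDim μ :=
  le_iInf₂ fun A hA => le_iInf (h A hA)

end LowerDim

namespace MeasureTheory.Measure

variable {G : Type*} [AddMonoid G] [MeasurableSpace G] [MeasurableAdd₂ G]

lemma conv_apply (μ ν : Measure G) [SFinite ν] {A : Set G} (hA : MeasurableSet A) :
    (μ ∗ ν) A = ∫⁻ x, ν ((x + ·) ⁻¹' A) ∂μ := by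
  rw [conv, map_apply measurable_add hA, prod_apply (measurable_add hA)]
  rfl

lemma exists_measure_preimage_add_left_pos_of_conv_pos (μ ν : Measure G) [SFinite ν] {A : Set G}
    (hA : MeasurableSet A) (hpos : 0 < (μ ∗ ν) A) : ∃ x, 0 < ν ((x + ·) ⁻¹' A) := by
  by_contra! h
  simp only [nonpos_iff_eq_zero] at h
  simp [conv_apply μ ν hA, h] at hpos

end MeasureTheory.Measure

section Convolution

variable {G : Type*} [EMetricSpace G] [MeasurableSpace G]

lemma lowerDim_le_lowerDim_conv_right [AddGroup G] [MeasurableAdd₂ G] [IsIsometricVAdd G G]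
    (μ ν : Measure G) [SFinite ν] : lowerDim ν ≤ lowerDim (μ ∗ ν) := by
  refine le_lowerDim fun A hA hpos => ?_
  obtain ⟨x, hx⟩ := μ.exists_measure_preimage_add_left_pos_of_conv_pos ν hA hpos
  calc lowerDim ν ≤ dimH ((x + ·) ⁻¹' A) := lowerDim_le_dimH_s12 (measurable_const_add x hA) hx
    _ = dimH A := (IsometryEquiv.addLeft x).dimH_preimage A

lemma lowerDim_le_lowerDim_conv_left [AddCommGroup G] [MeasurableAdd₂ G] [IsIsometricVAdd G G]
    (μ ν : Measure G) [SFinite μ] [SFinite ν] : lowerDim μ ≤ lowerDim (μ ∗ ν) :=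
  Measure.conv_comm μ ν ▸ lowerDim_le_lowerDim_conv_right ν μ

end Convolution

/-- For Borel probability measures `μ, ν` on `ℝ^d`, the convolution satisfies
`dim_*(μ * ν) ≥ max(dim_* μ, dim_* ν)`. -/
theorem stmt_12 (d : ℕ) (μ ν : Measure (EuclideanSpace ℝ (Fin d)))
    [IsProbabilityMeasure μ] [IsProbabilityMeasure ν] :
    lowerDim (μ.conv ν) ≥ max (lowerDim μ) (lowerDim ν) :=
  max_le (lowerDim_le_lowerDim_conv_left μ ν) (lowerDim_le_lowerDim_conv_right μ ν)
end
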